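/- arXiv:1910.10894 — 2 statements merged into one kernel-verified Lean document; each statement's English description precedes it below -/
import Mathlib

section
/- Let f be a smooth nonnegative function on ℝⁿ × (0,1] with ∂ₜ f ≤ Δ f pointwise and f(·,t) → 0 in L²_loc(ℝⁿ) as t → 0⁺. Then for every compactly supported Lipschitz function φ : ℝⁿ → ℝ and every t ∈ (0,1], (1/2) ∫ φ(x)² f(x,t)² dx ≤ ∫₀ᵗ ∫ |∇φ(x)|² f(x,s)² dx ds. -/
open MeasureTheory Filter Set Metric

/-- The Euclidean Laplacian of `g : ℝⁿ → ℝ`. -/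
noncomputable def heatLap {n : ℕ} (g : EuclideanSpace ℝ (Fin n) → ℝ)
    (x : EuclideanSpace ℝ (Fin n)) : ℝ :=
  ∑ i : Fin n, fderiv ℝ (fun y => fderiv ℝ g y (EuclideanSpace.single i (1 : ℝ))) x
    (EuclideanSpace.single i (1 : ℝ))

/-!
Write `g t = ∫ φ² f(t)²` and `h t = ∫ |∇φ|² f(t)²`. Since `f ≥ 0` and `∂ₜ f ≤ Δ f`,
`g' = 2 ∫ φ² f ∂ₜ f ≤ 2 ∫ φ² f Δ f`, and integrating by parts,
`∫ φ² f Δ f = -∫ φ² |∇f|² - 2 ∫ φ f ∇φ·∇f ≤ ∫ |∇φ|² f²` after absorbing the cross term.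
As `φ` is only Lipschitz, the integration by parts goes through Rademacher's theorem, after
cutting `f` off to a compactly supported function near `tsupport φ`. Both `g` and `h` are
continuous on `(0, 1]` and tend to `0` at `0⁺` by the `L²_loc` initial condition, so integrating
`g' ≤ 2 h` over `(0, t]` gives `g t ≤ 2 ∫₀ᵗ h`.
-/

open scoped Topology ENNReal

theorem LipschitzWith.exists_lipschitzWith_mul {α : Type*} [PseudoMetricSpace α] {f g : α → ℝ}
    {Kf Kg : NNReal} (hf : LipschitzWith Kf f) (hfc : HasCompactSupport f)
    (hg : LipschitzWith Kg g) (hgc : HasCompactSupport g) :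
    ∃ C, LipschitzWith C fun x => f x * g x := by
  obtain ⟨A, hA⟩ := hf.continuous.bounded_above_of_compact_support hfc
  obtain ⟨B, hB⟩ := hg.continuous.bounded_above_of_compact_support hgc
  refine ⟨_, LipschitzWith.of_dist_le' (K := A * Kg + B * Kf) fun x y => ?_⟩
  have hfxy : |f x - f y| ≤ Kf * dist x y := by simpa [Real.dist_eq] using hf.dist_le_mul x y
  have hgxy : |g x - g y| ≤ Kg * dist x y := by simpa [Real.dist_eq] using hg.dist_le_mul x y
  calc dist (f x * g x) (f y * g y) = |f x * (g x - g y) + g y * (f x - f y)| := by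
        rw [Real.dist_eq]; ring_nf
    _ ≤ |f x| * |g x - g y| + |g y| * |f x - f y| := by
        rw [← abs_mul, ← abs_mul]; exact abs_add_le _ _
    _ ≤ A * (Kg * dist x y) + B * (Kf * dist x y) := by
        gcongr
        exacts [(abs_nonneg _).trans (hA x), hA x, (abs_nonneg _).trans (hB y), hB y]
    _ = (A * Kg + B * Kf) * dist x y := by ring

theorem HasCompactSupport.integrable_mul_of_bound {X : Type*} [TopologicalSpace X] [T2Space X]
    [MeasurableSpace X] [OpensMeasurableSpace X] {μ : Measure X} [IsFiniteMeasureOnCompacts μ]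
    {ψ v : X → ℝ} (hψc : HasCompactSupport ψ) (hψ : AEStronglyMeasurable ψ μ) {C : ℝ}
    (hψC : ∀ x, ‖ψ x‖ ≤ C) (hv : Continuous v) : Integrable (fun x => ψ x * v x) μ := by
  refine IntegrableOn.integrable_of_forall_notMem_eq_zero (s := tsupport ψ) ?_
    fun x hx => by simp [image_eq_zero_of_notMem_tsupport hx]
  exact (hv.continuousOn.integrableOn_compact hψc).bdd_mul hψ.restrict (.of_forall hψC)

theorem continuousOn_update_Icc_of_tendsto {β : Type*} [TopologicalSpace β] {g : ℝ → β}
    {a b : ℝ} {c : β} (hab : a < b) (hg : ContinuousOn g (Ioc a b))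
    (hga : Tendsto g (𝓝[>] a) (𝓝 c)) : ContinuousOn (Function.update g a c) (Icc a b) := by
  rw [continuousOn_update_iff, Icc_sdiff_left, nhdsWithin_Ioc_eq_nhdsGT hab]
  exact ⟨hg, fun _ => hga⟩

theorem sub_le_intervalIntegral_of_tendsto_of_hasDerivAt_le {g g' h : ℝ → ℝ} {a b c d : ℝ}
    (hab : a < b) (hg : ContinuousOn g (Ioc a b)) (hga : Tendsto g (𝓝[>] a) (𝓝 c))
    (hh : ContinuousOn h (Ioc a b)) (hha : Tendsto h (𝓝[>] a) (𝓝 d))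
    (hderiv : ∀ x ∈ Ioo a b, HasDerivAt g (g' x) x) (hle : ∀ x ∈ Ioo a b, g' x ≤ h x) :
    g b - c ≤ ∫ x in a..b, h x := by
  have hupdate : ∀ x ∈ Ioo a b, Function.update g a c =ᶠ[𝓝 x] g := fun x hx =>
    (eventually_ne_nhds hx.1.ne').mono fun z hz => Function.update_of_ne hz _ _
  have key := intervalIntegral.sub_le_integral_of_hasDeriv_right_of_le hab.le
    (continuousOn_update_Icc_of_tendsto hab hg hga)
    (fun x hx => ((hderiv x hx).congr_of_eventuallyEq (hupdate x hx)).hasDerivWithinAt)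
    (continuousOn_update_Icc_of_tendsto hab hh hha).integrableOn_Icc
    (fun x hx => by rw [Function.update_of_ne hx.1.ne']; exact hle x hx)
  rw [Function.update_self, Function.update_of_ne hab.ne'] at key
  refine key.trans_eq (intervalIntegral.integral_congr_ae ?_)
  filter_upwards with x hx
  rw [uIoc_of_le hab.le] at hx
  exact Function.update_of_ne hx.1.ne' _ _

theorem tendsto_integral_mul_sq_of_tendsto_lintegral_ball {E : Type*} [NormedAddCommGroup E]
    [MeasurableSpace E] [OpensMeasurableSpace E] {μ : Measure E} {ι : Type*} {l : Filter ι}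
    {ψ : E → ℝ} (hψc : HasCompactSupport ψ) {C : ℝ} (hψC : ∀ x, ‖ψ x‖ ≤ C) {v : ι → E → ℝ}
    (hv : ∀ R > (0 : ℝ),
      Tendsto (fun i => ∫⁻ x in ball 0 R, ENNReal.ofReal (v i x ^ 2) ∂μ) l (𝓝 0)) :
    Tendsto (fun i => ∫ x, ψ x * v i x ^ 2 ∂μ) l (𝓝 0) := by
  obtain ⟨R, hR, hψR⟩ := hψc.isCompact.isBounded.subset_ball_lt 0 0
  have hbound : ∀ i, ‖∫ x, ψ x * v i x ^ 2 ∂μ‖ₑ ≤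
      ENNReal.ofReal C * ∫⁻ x in ball 0 R, ENNReal.ofReal (v i x ^ 2) ∂μ := fun i =>
    calc ‖∫ x, ψ x * v i x ^ 2 ∂μ‖ₑ ≤ ∫⁻ x, ‖ψ x * v i x ^ 2‖ₑ ∂μ :=
          enorm_integral_le_lintegral_enorm _
      _ ≤ ∫⁻ x, (ball 0 R).indicator
            (fun x => ENNReal.ofReal C * ENNReal.ofReal (v i x ^ 2)) x ∂μ := by
          refine lintegral_mono fun x => ?_
          by_cases hx : x ∈ ball 0 R
          · rw [indicator_of_mem hx, enorm_mul, Real.enorm_of_nonneg (sq_nonneg _),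
              ← ofReal_norm]
            gcongr
            exact hψC x
          · simp [image_eq_zero_of_notMem_tsupport fun h => hx (hψR h)]
      _ = ENNReal.ofReal C * ∫⁻ x in ball 0 R, ENNReal.ofReal (v i x ^ 2) ∂μ := by
          rw [lintegral_indicator measurableSet_ball,
            lintegral_const_mul' _ _ ENNReal.ofReal_ne_top]
  rw [tendsto_zero_iff_enorm_tendsto_zero]
  refine tendsto_of_tendsto_of_tendsto_of_le_of_le tendsto_const_nhds ?_ (fun _ => zero_le)
    hbound
  simpa using ENNReal.Tendsto.const_mul (hv R hR) (Or.inr ENNReal.ofReal_ne_top)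

section NormedSpace

variable {E : Type*} [NormedAddCommGroup E] [NormedSpace ℝ E]

theorem Filter.EventuallyEq.fderiv_fderiv_apply_eq {u v : E → ℝ} {x : E} (h : u =ᶠ[𝓝 x] v)
    (e : E) :
    fderiv ℝ (fun y => fderiv ℝ u y e) x e = fderiv ℝ (fun y => fderiv ℝ v y e) x e := by
  have : (fun y => fderiv ℝ u y e) =ᶠ[𝓝 x] fun y => fderiv ℝ v y e :=
    (h.fderiv (𝕜 := ℝ)).mono fun y hy => congrArg (· e) hy
  rw [this.fderiv_eq]

theorem ContDiff.continuous_fderiv_fderiv_apply {u : E → ℝ} (hu : ContDiff ℝ 2 u) (e : E) :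
    Continuous fun x => fderiv ℝ (fun y => fderiv ℝ u y e) x e :=
  (((hu.fderiv_right (m := 1) (by norm_num)).clm_apply contDiff_const).continuous_fderiv
    one_ne_zero).clm_apply continuous_const

section Slices

variable {F : ℝ → E → ℝ} {s : Set ℝ}

theorem ContDiffOn.contDiff_slice {n : WithTop ℕ∞}
    (hF : ContDiffOn ℝ n (fun p : ℝ × E => F p.1 p.2) (s ×ˢ univ)) {t : ℝ} (ht : t ∈ s) :
    ContDiff ℝ n (F t) :=
  contDiffOn_univ.mp <| hF.comp (contDiff_const.prodMk contDiff_id).contDiffOn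
    fun _ _ => ⟨ht, mem_univ _⟩

theorem ContDiffOn.hasDerivAt_slice (hs : IsOpen s)
    (hF : ContDiffOn ℝ 1 (fun p : ℝ × E => F p.1 p.2) (s ×ˢ univ)) {t : ℝ} (ht : t ∈ s) (x : E) :
    HasDerivAt (F · x) (fderiv ℝ (fun p : ℝ × E => F p.1 p.2) (t, x) (1, 0)) t := by
  have hdiff : DifferentiableAt ℝ (fun p : ℝ × E => F p.1 p.2) (t, x) :=
    (hF.contDiffAt ((hs.prod isOpen_univ).mem_nhds ⟨ht, mem_univ x⟩)).differentiableAt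
      one_ne_zero
  exact hdiff.hasFDerivAt.comp_hasDerivAt t ((hasDerivAt_id t).prodMk (hasDerivAt_const t x))

theorem ContDiffOn.continuousOn_deriv_slice (hs : IsOpen s)
    (hF : ContDiffOn ℝ 1 (fun p : ℝ × E => F p.1 p.2) (s ×ˢ univ)) :
    ContinuousOn (fun p : ℝ × E => deriv (F · p.2) p.1) (s ×ˢ univ) := by
  refine ((hF.continuousOn_fderiv_of_isOpen (hs.prod isOpen_univ) le_rfl).clm_apply
    (continuousOn_const (c := ((1 : ℝ), (0 : E))))).congr fun p hp => ?_
  exact (hF.hasDerivAt_slice hs hp.1 p.2).deriv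

end Slices

theorem IsCompact.exists_contDiffBump_eventuallyEq_one [FiniteDimensional ℝ E] {k : Set E}
    (hk : IsCompact k) : ∃ χ : ContDiffBump (0 : E), ∀ x ∈ k, χ =ᶠ[𝓝 x] 1 := by
  obtain ⟨R, hR, hkR⟩ := hk.isBounded.subset_ball_lt 0 0
  exact ⟨⟨R, R + 1, hR, by linarith⟩, fun x hx => (ContDiffBump.eventuallyEq_one_of_mem_ball _
    (hkR hx))⟩

variable [MeasurableSpace E] [BorelSpace E] {μ : Measure E}

theorem hasDerivAt_integral_mul_of_contDiffOn [IsFiniteMeasureOnCompacts μ] {ψ : E → ℝ}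
    (hψ : Continuous ψ) (hψc : HasCompactSupport ψ) {F : ℝ → E → ℝ} {s : Set ℝ} (hs : IsOpen s)
    (hF : ContDiffOn ℝ 1 (fun p : ℝ × E => F p.1 p.2) (s ×ˢ univ)) {t₀ : ℝ} (ht₀ : t₀ ∈ s) :
    Integrable (fun x => ψ x * deriv (F · x) t₀) μ ∧
      HasDerivAt (fun t => ∫ x, ψ x * F t x ∂μ) (∫ x, ψ x * deriv (F · x) t₀ ∂μ) t₀ := by
  obtain ⟨δ, hδ, hδs⟩ := Metric.isOpen_iff.mp hs t₀ ht₀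
  have hK : IsCompact (closedBall t₀ (δ / 2) ×ˢ tsupport ψ) :=
    (isCompact_closedBall _ _).prod hψc
  have hKs : closedBall t₀ (δ / 2) ×ˢ tsupport ψ ⊆ s ×ˢ univ :=
    prod_mono ((closedBall_subset_ball (by linarith)).trans hδs) (subset_univ _)
  have hF' := hF.continuousOn_deriv_slice hs
  obtain ⟨M, hM⟩ := hK.exists_bound_of_continuousOn
    (f := fun p : ℝ × E => ψ p.2 * deriv (F · p.2) p.1)
    ((hψ.comp continuous_snd).continuousOn.mul (hF'.mono hKs))
  have hslice : ∀ t ∈ s, Continuous (F t) := fun t ht =>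
    (hF.contDiff_slice (n := 1) ht).continuous
  refine hasDerivAt_integral_of_dominated_loc_of_deriv_le (ball_mem_nhds t₀ (half_pos hδ))
    (F := fun t x => ψ x * F t x) (F' := fun t x => ψ x * deriv (F · x) t)
    (bound := (tsupport ψ).indicator fun _ => M) ?_ ?_ ?_ ?_ ?_ ?_
  · filter_upwards [hs.mem_nhds ht₀] with t ht
    exact (hψ.mul (hslice t ht)).aestronglyMeasurable
  · exact (hψ.mul (hslice t₀ ht₀)).integrable_of_hasCompactSupport hψc.mul_right
  · exact (hψ.mul (hF'.comp_continuous (continuous_const.prodMk continuous_id)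
      fun x => ⟨ht₀, mem_univ x⟩)).aestronglyMeasurable
  · filter_upwards with x t ht
    by_cases hx : x ∈ tsupport ψ
    · rw [indicator_of_mem hx]
      exact hM (t, x) ⟨ball_subset_closedBall ht, hx⟩
    · simp [indicator_of_notMem hx, image_eq_zero_of_notMem_tsupport hx]
  · exact (integrableOn_const hψc.measure_lt_top.ne).integrable_indicator
      hψc.isCompact.measurableSet
  · filter_upwards with x t ht
    have hts : t ∈ s := hδs (ball_subset_ball (by linarith) ht)
    exact ((hF.hasDerivAt_slice hs hts x).differentiableAt.hasDerivAt).const_mul (ψ x)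

theorem LipschitzWith.integrable_fderiv_apply_sq_mul [IsFiniteMeasureOnCompacts μ]
    {φ v : E → ℝ} {K : NNReal} (hφ : LipschitzWith K φ) (hφc : HasCompactSupport φ)
    (hv : Continuous v) (e : E) : Integrable (fun x => fderiv ℝ φ x e ^ 2 * v x) μ := by
  refine HasCompactSupport.integrable_mul_of_bound
    ((hφc.fderiv_apply ℝ e).comp_left (g := fun y : ℝ => y ^ 2) (by simp))
    ((measurable_fderiv_apply_const ℝ φ e).pow_const 2).aestronglyMeasurable
    (C := (K * ‖e‖) ^ 2) (fun x => ?_) hv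
  rw [norm_pow]
  gcongr
  exact ((fderiv ℝ φ x).le_opNorm e).trans
    (mul_le_mul_of_nonneg_right (norm_fderiv_le_of_lipschitz ℝ hφ) (norm_nonneg e))

variable [FiniteDimensional ℝ E]

theorem continuousOn_integral_mul_of_continuousOn [IsFiniteMeasureOnCompacts μ] {ψ : E → ℝ}
    (hψc : HasCompactSupport ψ) (hψ : AEStronglyMeasurable ψ μ) {C : ℝ} (hψC : ∀ x, ‖ψ x‖ ≤ C)
    {X : Type*} [TopologicalSpace X] {F : X → E → ℝ} {s : Set X}
    (hF : ContinuousOn (fun p : X × E => F p.1 p.2) (s ×ˢ univ)) :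
    ContinuousOn (fun t => ∫ x, ψ x * F t x ∂μ) s := by
  obtain ⟨χ, hχ⟩ := hψc.isCompact.exists_contDiffBump_eventuallyEq_one
  have hcut : ∀ t x, ψ x * (χ x * F t x) = ψ x * F t x := fun t x => by
    by_cases hx : x ∈ tsupport ψ
    · rw [(hχ x hx).eq_of_nhds, Pi.one_apply, one_mul]
    · simp [image_eq_zero_of_notMem_tsupport hx]
  have := continuousOn_integral_bilinear_of_locally_integrable_of_compact_support (μ := μ)
    (ContinuousLinearMap.mul ℝ ℝ) (f := fun t x => χ x * F t x) χ.hasCompactSupport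
    ((χ.continuous.comp continuous_snd).continuousOn.mul hF)
    (fun t x _ hx => by simp [image_eq_zero_of_notMem_tsupport hx])
    (memLp_one_iff_integrable.mp (hψc.memLp_of_bound hψ C (.of_forall hψC))).integrableOn
  simpa only [ContinuousLinearMap.mul_apply', hcut] using this

variable [μ.IsAddHaarMeasure]

theorem integral_sq_mul_mul_fderiv_fderiv_le_of_hasCompactSupport {φ u : E → ℝ} {K : NNReal}
    (hφ : LipschitzWith K φ) (hφc : HasCompactSupport φ) (hu : ContDiff ℝ 2 u)
    (huc : HasCompactSupport u) (e : E) :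
    ∫ x, φ x ^ 2 * u x * fderiv ℝ (fun y => fderiv ℝ u y e) x e ∂μ ≤
      ∫ x, fderiv ℝ φ x e ^ 2 * u x ^ 2 ∂μ := by
  set w : E → ℝ := fun y => fderiv ℝ u y e
  have hw : ContDiff ℝ 1 w := (hu.fderiv_right (m := 1) (by norm_num)).clm_apply contDiff_const
  obtain ⟨Cw, hwL⟩ := hw.lipschitzWith_of_hasCompactSupport (huc.fderiv_apply ℝ e) one_ne_zero
  obtain ⟨Cu, huL⟩ := (hu.of_le (by norm_num)).lipschitzWith_of_hasCompactSupport huc one_ne_zero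
  set g : E → ℝ := fun x => φ x ^ 2 * u x
  obtain ⟨Cg, hgL⟩ : ∃ C, LipschitzWith C g := by
    obtain ⟨C₁, hφuL⟩ := hφ.exists_lipschitzWith_mul hφc huL huc
    obtain ⟨C, hC⟩ := hφ.exists_lipschitzWith_mul hφc hφuL huc.mul_left
    refine ⟨C, (funext fun x => ?_ : (fun x => φ x * (φ x * u x)) = g) ▸ hC⟩
    ring
  have hibp := hwL.integral_lineDeriv_mul_eq (μ := μ) hgL huc.mul_left e
  have hlhs : ∀ x, lineDeriv ℝ w x e * g x = φ x ^ 2 * u x * fderiv ℝ w x e := fun x => by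
    rw [(hw.differentiable one_ne_zero x).lineDeriv_eq_fderiv]; ring
  have hrhs : ∀ᵐ x ∂μ, lineDeriv ℝ g x (-e) * w x ≤ fderiv ℝ φ x e ^ 2 * u x ^ 2 := by
    filter_upwards [hφ.ae_differentiableAt (μ := μ)] with x hx
    have hgx := HasFDerivAt.fun_mul (HasFDerivAt.pow hx.hasFDerivAt 2)
      (hu.differentiable (by norm_num) x).hasFDerivAt
    rw [(hgx.hasLineDerivAt (-e)).lineDeriv]
    simp only [map_neg, FunLike.coe_add, FunLike.coe_smul, Pi.add_apply, Pi.smul_apply,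
      smul_eq_mul, nsmul_eq_mul, Nat.cast_ofNat, Nat.add_one_sub_one, pow_one, w]
    nlinarith [sq_nonneg (φ x * w x + fderiv ℝ φ x e * u x)]
  have hw_int : Integrable w μ :=
    hw.continuous.integrable_of_hasCompactSupport (huc.fderiv_apply ℝ e)
  calc ∫ x, φ x ^ 2 * u x * fderiv ℝ w x e ∂μ = ∫ x, lineDeriv ℝ g x (-e) * w x ∂μ := by
        simp_rw [← hlhs]; exact hibp
    _ ≤ ∫ x, fderiv ℝ φ x e ^ 2 * u x ^ 2 ∂μ :=
        integral_mono_ae (hw_int.bdd_mul (aestronglyMeasurable_lineDeriv hgL.continuous μ)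
          (.of_forall fun x => norm_lineDeriv_le_of_lipschitz ℝ hgL))
          (hφ.integrable_fderiv_apply_sq_mul hφc (hu.continuous.pow 2) e) hrhs

theorem integral_sq_mul_mul_fderiv_fderiv_le {φ u : E → ℝ} {K : NNReal}
    (hφ : LipschitzWith K φ) (hφc : HasCompactSupport φ) (hu : ContDiff ℝ 2 u) (e : E) :
    ∫ x, φ x ^ 2 * u x * fderiv ℝ (fun y => fderiv ℝ u y e) x e ∂μ ≤
      ∫ x, fderiv ℝ φ x e ^ 2 * u x ^ 2 ∂μ := by
  obtain ⟨χ, hχ⟩ := hφc.isCompact.exists_contDiffBump_eventuallyEq_one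
  set v : E → ℝ := fun x => χ x * u x
  have hv : ∀ x ∈ tsupport φ, v =ᶠ[𝓝 x] u := fun x hx =>
    (hχ x hx).mono fun y hy => by simp [v, hy]
  have hlhs : ∀ x, φ x ^ 2 * v x * fderiv ℝ (fun y => fderiv ℝ v y e) x e =
      φ x ^ 2 * u x * fderiv ℝ (fun y => fderiv ℝ u y e) x e := fun x => by
    by_cases hx : x ∈ tsupport φ
    · rw [(hv x hx).eq_of_nhds, (hv x hx).fderiv_fderiv_apply_eq]
    · simp [image_eq_zero_of_notMem_tsupport hx]
  have hrhs : ∀ x, fderiv ℝ φ x e ^ 2 * v x ^ 2 = fderiv ℝ φ x e ^ 2 * u x ^ 2 := fun x => by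
    by_cases hx : x ∈ tsupport φ
    · rw [(hv x hx).eq_of_nhds]
    · simp [Function.notMem_support.mp fun h => hx (support_fderiv_subset ℝ h)]
  simp_rw [← hlhs, ← hrhs]
  exact integral_sq_mul_mul_fderiv_fderiv_le_of_hasCompactSupport hφ hφc
    (χ.contDiff.mul hu) χ.hasCompactSupport.mul_right e

end NormedSpace

section Gradient

variable {F : Type*} [NormedAddCommGroup F] [InnerProductSpace ℝ F] [CompleteSpace F]
  {φ : F → ℝ}

theorem LipschitzWith.norm_norm_gradient_sq_le {K : NNReal} (hφ : LipschitzWith K φ) (x : F) :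
    ‖‖gradient φ x‖ ^ 2‖ ≤ K ^ 2 := by
  rw [norm_pow, norm_norm]
  gcongr
  simpa [gradient] using norm_fderiv_le_of_lipschitz ℝ hφ (x₀ := x)

theorem HasCompactSupport.norm_gradient_sq (hφc : HasCompactSupport φ) :
    HasCompactSupport fun x => ‖gradient φ x‖ ^ 2 :=
  hφc.mono' fun _ hx => support_fderiv_subset ℝ fun h => hx (by simp [gradient, h])

theorem measurable_gradient [MeasurableSpace F] [BorelSpace F] (φ : F → ℝ) :
    Measurable (gradient φ) :=
  (InnerProductSpace.toDual ℝ F).symm.continuous.measurable.comp (measurable_fderiv ℝ φ)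

end Gradient

section Euclidean

variable {n : ℕ}

theorem norm_gradient_sq_eq_sum (φ : EuclideanSpace ℝ (Fin n) → ℝ)
    (x : EuclideanSpace ℝ (Fin n)) :
    ‖gradient φ x‖ ^ 2 = ∑ i, fderiv ℝ φ x (EuclideanSpace.single i 1) ^ 2 := by
  simp_rw [← inner_gradient_left, EuclideanSpace.inner_single_right, EuclideanSpace.norm_sq_eq]
  simp

theorem ContDiff.continuous_heatLap {u : EuclideanSpace ℝ (Fin n) → ℝ} (hu : ContDiff ℝ 2 u) :
    Continuous (heatLap u) :=
  continuous_finsetSum _ fun _ _ => hu.continuous_fderiv_fderiv_apply _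

theorem integral_sq_mul_mul_heatLap_le {φ u : EuclideanSpace ℝ (Fin n) → ℝ} {K : NNReal}
    (hφ : LipschitzWith K φ) (hφc : HasCompactSupport φ) (hu : ContDiff ℝ 2 u) :
    ∫ x, φ x ^ 2 * u x * heatLap u x ≤ ∫ x, ‖gradient φ x‖ ^ 2 * u x ^ 2 := by
  simp_rw [heatLap, Finset.mul_sum, norm_gradient_sq_eq_sum, Finset.sum_mul]
  rw [integral_finsetSum _ fun i _ => ?_, integral_finsetSum _ fun i _ => ?_]
  · exact Finset.sum_le_sum fun i _ => integral_sq_mul_mul_fderiv_fderiv_le hφ hφc hu _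
  · exact hφ.integrable_fderiv_apply_sq_mul hφc (hu.continuous.pow 2) _
  · exact (((hφ.continuous.pow 2).mul hu.continuous).mul
      (hu.continuous_fderiv_fderiv_apply _)).integrable_of_hasCompactSupport
      (hφc.mono fun x hx h => hx (by simp [h]))

theorem exists_hasDerivAt_integral_sq_mul_sq_le {φ : EuclideanSpace ℝ (Fin n) → ℝ} {K : NNReal}
    (hφ : LipschitzWith K φ) (hφc : HasCompactSupport φ) {f : ℝ → EuclideanSpace ℝ (Fin n) → ℝ}
    {U : Set ℝ} (hU : IsOpen U)
    (hf : ContDiffOn ℝ 2 (fun p : ℝ × EuclideanSpace ℝ (Fin n) => f p.1 p.2) (U ×ˢ univ))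
    {s : ℝ} (hs : s ∈ U) (hf_nonneg : ∀ x, 0 ≤ f s x)
    (hf_subsol : ∀ x, deriv (f · x) s ≤ heatLap (f s) x) :
    ∃ D, HasDerivAt (fun t => ∫ x, φ x ^ 2 * f t x ^ 2) D s ∧
      D ≤ 2 * ∫ x, ‖gradient φ x‖ ^ 2 * f s x ^ 2 := by
  have hf1 : ContDiffOn ℝ 1 (fun p : ℝ × EuclideanSpace ℝ (Fin n) => f p.1 p.2) (U ×ˢ univ) :=
    hf.of_le (by norm_num)
  obtain ⟨hint, hderiv⟩ := hasDerivAt_integral_mul_of_contDiffOn (μ := volume)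
    (F := fun t x => f t x ^ 2) (hφ.continuous.pow 2) (hφc.mono fun x hx h => hx (by simp [h]))
    hU (hf1.pow 2) hs
  refine ⟨_, hderiv, ?_⟩
  have hu : ContDiff ℝ 2 (f s) := hf.contDiff_slice hs
  have hpt : ∀ x, φ x ^ 2 * deriv (fun t => f t x ^ 2) s ≤
      2 * (φ x ^ 2 * f s x * heatLap (f s) x) := fun x => by
    have hd := hf1.hasDerivAt_slice hU hs x
    rw [(hd.fun_pow 2).deriv, ← hd.deriv]
    have := mul_le_mul_of_nonneg_left (hf_subsol x) (mul_nonneg (sq_nonneg (φ x)) (hf_nonneg x))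
    simp only [Nat.cast_ofNat, Nat.add_one_sub_one, pow_one]
    linarith
  have hint' : Integrable (fun x => 2 * (φ x ^ 2 * f s x * heatLap (f s) x)) :=
    ((((hφ.continuous.pow 2).mul hu.continuous).mul hu.continuous_heatLap).const_mul 2
      ).integrable_of_hasCompactSupport (hφc.mono fun x hx h => hx (by simp [h]))
  calc ∫ x, φ x ^ 2 * deriv (fun t => f t x ^ 2) s
      ≤ ∫ x, 2 * (φ x ^ 2 * f s x * heatLap (f s) x) := integral_mono hint hint' hpt
    _ ≤ 2 * ∫ x, ‖gradient φ x‖ ^ 2 * f s x ^ 2 := by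
      rw [integral_const_mul]
      exact mul_le_mul_of_nonneg_left (integral_sq_mul_mul_heatLap_le hφ hφc hu) two_pos.le

end Euclidean

/-- **Caccioppoli-type energy inequality.** For a nonnegative smooth subsolution `f` of
the heat equation on `ℝⁿ × (0,1]` with zero initial data in `L²_loc`, and any compactly
supported Lipschitz cutoff `φ`,
`(1/2) ∫ φ² f(t)² ≤ ∫₀ᵗ ∫ |∇φ|² f(s)²` for all `t ∈ (0,1]`. -/
theorem heat_caccioppoli_inequality {n : ℕ}
    (f : ℝ → EuclideanSpace ℝ (Fin n) → ℝ)
    (hf_smooth : ContDiffOn ℝ (⊤ : ℕ∞)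
      (fun p : ℝ × EuclideanSpace ℝ (Fin n) => f p.1 p.2) (Set.Ioc (0:ℝ) 1 ×ˢ Set.univ))
    (hf_nonneg : ∀ t ∈ Set.Ioc (0:ℝ) 1, ∀ x, 0 ≤ f t x)
    (hf_subsol : ∀ t ∈ Set.Ioc (0:ℝ) 1, ∀ x, deriv (fun s => f s x) t ≤ heatLap (f t) x)
    (hf_init : ∀ R > (0:ℝ),
      Tendsto (fun t => ∫⁻ x in ball (0 : EuclideanSpace ℝ (Fin n)) R,
        ENNReal.ofReal ((f t x) ^ 2)) (nhdsWithin 0 (Set.Ioi 0)) (nhds 0)) :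
    ∀ φ : EuclideanSpace ℝ (Fin n) → ℝ, (∃ K, LipschitzWith K φ) → HasCompactSupport φ →
      ∀ t ∈ Set.Ioc (0:ℝ) 1,
        (1 / 2) * (∫ x, (φ x) ^ 2 * (f t x) ^ 2) ≤
          ∫ s in Set.Ioc (0:ℝ) t, ∫ x, ‖gradient φ x‖ ^ 2 * (f s x) ^ 2 := by
  rintro φ ⟨K, hφ⟩ hφc t ⟨ht₀, ht₁⟩
  have hφ₂c : HasCompactSupport fun x => φ x ^ 2 := hφc.mono fun x hx h => hx (by simp [h])
  obtain ⟨C, hC⟩ := (hφ.continuous.pow 2).bounded_above_of_compact_support hφ₂c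
  have hf_sq : ContinuousOn (fun p : ℝ × EuclideanSpace ℝ (Fin n) => f p.1 p.2 ^ 2)
      (Ioc 0 t ×ˢ univ) :=
    (hf_smooth.continuousOn.pow 2).mono (prod_mono (Ioc_subset_Ioc_right ht₁) subset_rfl)
  have hderiv : ∀ s ∈ Ioo 0 t, ∃ D, HasDerivAt (fun s => ∫ x, φ x ^ 2 * f s x ^ 2) D s ∧
      D ≤ 2 * ∫ x, ‖gradient φ x‖ ^ 2 * f s x ^ 2 := fun s hs =>
    have hs₁ : s ∈ Ioc 0 1 := ⟨hs.1, hs.2.le.trans ht₁⟩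
    exists_hasDerivAt_integral_sq_mul_sq_le hφ hφc isOpen_Ioo
      ((hf_smooth.of_le (by norm_cast)).mono (prod_mono Ioo_subset_Ioc_self subset_rfl))
      ⟨hs.1, hs.2.trans_le ht₁⟩ (hf_nonneg s hs₁) (hf_subsol s hs₁)
  choose! D hD hD_le using hderiv
  have key := sub_le_intervalIntegral_of_tendsto_of_hasDerivAt_le
    (g := fun s => ∫ x, φ x ^ 2 * f s x ^ 2)
    (h := fun s => 2 * ∫ x, ‖gradient φ x‖ ^ 2 * f s x ^ 2) ht₀
    (continuousOn_integral_mul_of_continuousOn hφ₂c (hφ.continuous.pow 2).aestronglyMeasurable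
      hC hf_sq)
    (tendsto_integral_mul_sq_of_tendsto_lintegral_ball hφ₂c hC hf_init)
    (continuousOn_const.mul (continuousOn_integral_mul_of_continuousOn hφc.norm_gradient_sq
      ((measurable_gradient φ).norm.pow_const 2).aestronglyMeasurable
      hφ.norm_norm_gradient_sq_le hf_sq))
    ((tendsto_integral_mul_sq_of_tendsto_lintegral_ball hφc.norm_gradient_sq
      hφ.norm_norm_gradient_sq_le hf_init).const_mul 2)
    hD hD_le
  rw [intervalIntegral.integral_of_le ht₀.le, integral_const_mul] at key
  linarith
end

section
/- Let n ≥ 3. There exist a continuous nonnegative function u₀ ∈ L¹(ℝⁿ) and a constant C(n) > 0 such that the heat-kernel convolution u(x,t) = ∫_{ℝⁿ} (4πt)^{−n/2} e^{−|x−y|²/(4t)} u₀(y) dy satisfies: (i) 0 ≤ u(x,t) ≤ ‖u₀‖_{L¹} (4πt)^{−n/2} for all (x,t) ∈ ℝⁿ × (0,1], so u lies in the uniqueness class of Theorem 1; and (ii) for every integer i ≥ 1, ∫₀¹ ∫_{B(0,i+1)} u(x,t)² dx dt ≥ C(n) e^{((n−2)/n) i³}, so u violates the growth condition ∫₀¹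 ∫_{B(0,r)} u² ≤ e^{L(r)} for every function L with ∫₁^∞ r/L(r) dr = ∞. -/
open MeasureTheory Set Metric Real

/-- The heat-kernel convolution of an initial datum `u₀` on `ℝⁿ`. -/
noncomputable def heatConv {n : ℕ} (u₀ : EuclideanSpace ℝ (Fin n) → ℝ)
    (x : EuclideanSpace ℝ (Fin n)) (t : ℝ) : ℝ :=
  ∫ y, (4 * π * t) ^ (-(n:ℝ) / 2) * Real.exp (-‖x - y‖ ^ 2 / (4 * t)) * u₀ y

/-!
Put tents of height `hᵢ = e^{i³+5i}` and radius `ρᵢ = e^{-(i³+6i)/n}` at the points `i • e` of a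
ray. Their masses `hᵢρᵢⁿ = e^{-i}` are summable, so `u₀` is integrable, and the bound
`u ≤ ‖u₀‖₁ (4πt)^{-n/2}` only uses `e^{-|x-y|²/4t} ≤ 1`. For `t ∈ [ρᵢ²/4, ρᵢ²]` and `x` within
`ρᵢ/2` of the `i`-th centre the heat flow has not yet spread the tent, so `u ≳ hᵢ` there and
`∫₀¹ ∫_{B(0,i+1)} u² ≳ hᵢ² ρᵢ^{n+2} ≥ e^{(n-2)i³/n}`; the exponents of `hᵢ` and `ρᵢ` are tuned
so that this last inequality holds once `n ≥ 3`. Hence any nondecreasing `L` with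
`∫₀¹ ∫_{B(0,r)} u² ≤ e^{L(r)}` grows like `r³`, and `∫₁^∞ r / L(r) dr < ∞`.
-/

open Filter

section HeatConv

variable {n : ℕ} {u₀ : EuclideanSpace ℝ (Fin n) → ℝ} {t : ℝ}

lemma exp_neg_sq_div_le_one (z : ℝ) (ht : 0 ≤ t) : exp (-z ^ 2 / (4 * t)) ≤ 1 :=
  exp_le_one_iff.2 (div_nonpos_of_nonpos_of_nonneg (neg_nonpos.2 (sq_nonneg z)) (by positivity))

lemma integrable_heatConv_integrand (hu : Integrable u₀) (x : EuclideanSpace ℝ (Fin n))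
    (ht : 0 ≤ t) :
    Integrable fun y => (4 * π * t) ^ (-(n:ℝ) / 2) * exp (-‖x - y‖ ^ 2 / (4 * t)) * u₀ y := by
  refine hu.bdd_mul (c := (4 * π * t) ^ (-(n:ℝ) / 2))
    (Continuous.aestronglyMeasurable (by fun_prop)) (ae_of_all _ fun y => ?_)
  rw [norm_mul, Real.norm_of_nonneg (by positivity), Real.norm_of_nonneg (exp_pos _).le]
  exact mul_le_of_le_one_right (by positivity) (exp_neg_sq_div_le_one _ ht)

lemma heatConv_nonneg (hu : ∀ y, 0 ≤ u₀ y) (x : EuclideanSpace ℝ (Fin n)) (ht : 0 ≤ t) :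
    0 ≤ heatConv u₀ x t :=
  integral_nonneg fun y => by have := hu y; positivity

lemma heatConv_le (hu : Integrable u₀) (x : EuclideanSpace ℝ (Fin n)) (ht : 0 ≤ t) :
    heatConv u₀ x t ≤ (∫ y, |u₀ y|) * (4 * π * t) ^ (-(n:ℝ) / 2) := by
  rw [mul_comm, ← integral_const_mul, heatConv]
  refine integral_mono (integrable_heatConv_integrand hu x ht) (hu.abs.const_mul _) fun y => ?_
  rw [mul_assoc]
  refine mul_le_mul_of_nonneg_left ?_ (by positivity)
  calc exp (-‖x - y‖ ^ 2 / (4 * t)) * u₀ y ≤ exp (-‖x - y‖ ^ 2 / (4 * t)) * |u₀ y| :=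
        mul_le_mul_of_nonneg_left (le_abs_self _) (exp_pos _).le
    _ ≤ |u₀ y| := mul_le_of_le_one_left (abs_nonneg _) (exp_neg_sq_div_le_one _ ht)

lemma le_heatConv_of_le_on_ball (hu : Integrable u₀) (hu₀ : ∀ y, 0 ≤ u₀ y) (ht : 0 < t)
    {x p : EuclideanSpace ℝ (Fin n)} {s m : ℝ} (hm : ∀ y ∈ ball p s, m ≤ u₀ y)
    (hx : (dist x p + s) ^ 2 ≤ 4 * t) :
    (4 * π * t) ^ (-(n:ℝ) / 2) * exp (-1) * m * volume.real (ball p s) ≤ heatConv u₀ x t := by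
  set c := (4 * π * t) ^ (-(n:ℝ) / 2)
  have hc : 0 ≤ c := by positivity
  have hint := integrable_heatConv_integrand hu x ht.le
  have hlow : ∀ y ∈ ball p s, c * exp (-1) * m ≤ c * exp (-‖x - y‖ ^ 2 / (4 * t)) * u₀ y := by
    intro y hy
    have hxy : ‖x - y‖ ≤ dist x p + s := by
      rw [← dist_eq_norm]
      exact (dist_triangle_right x y p).trans (by gcongr; exact (mem_ball.1 hy).le)
    have hexp : exp (-1) ≤ exp (-‖x - y‖ ^ 2 / (4 * t)) := by
      rw [exp_le_exp, neg_div, neg_le_neg_iff, div_le_one (by positivity)]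
      exact (pow_le_pow_left₀ (norm_nonneg _) hxy 2).trans hx
    calc c * exp (-1) * m ≤ c * exp (-1) * u₀ y := by gcongr; exact hm y hy
      _ ≤ c * exp (-‖x - y‖ ^ 2 / (4 * t)) * u₀ y := by gcongr; exact hu₀ y
  calc c * exp (-1) * m * volume.real (ball p s)
      = volume.real (ball p s) • (c * exp (-1) * m) := by rw [smul_eq_mul, mul_comm]
    _ ≤ ∫ y in ball p s, c * exp (-‖x - y‖ ^ 2 / (4 * t)) * u₀ y :=
        setIntegral_ge_of_const_le measurableSet_ball measure_ball_lt_top.ne hlow hint.integrableOn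
    _ ≤ heatConv u₀ x t :=
        setIntegral_le_integral hint (ae_of_all _ fun y => by have := hu₀ y; positivity)

end HeatConv

section Tent

variable {X : Type*} [PseudoMetricSpace X] {p y : X} {ρ h : ℝ}

noncomputable def tent (p : X) (ρ h : ℝ) (y : X) : ℝ := h * max 0 (1 - dist y p / ρ)

lemma continuous_tent : Continuous (tent p ρ h) := by
  unfold tent; fun_prop

lemma tent_nonneg (hh : 0 ≤ h) : 0 ≤ tent p ρ h y :=
  mul_nonneg hh (le_max_left _ _)

lemma tent_le (hh : 0 ≤ h) (hρ : 0 ≤ ρ) : tent p ρ h y ≤ h :=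
  mul_le_of_le_one_right hh (max_le zero_le_one (sub_le_self _ (by positivity)))

lemma support_tent_subset (hρ : 0 < ρ) : Function.support (tent p ρ h) ⊆ ball p ρ := by
  intro y hy
  by_contra hny
  rw [mem_ball, not_lt] at hny
  exact hy (by simp [tent, (one_le_div hρ).2 hny])

lemma half_le_tent (hh : 0 ≤ h) (hρ : 0 < ρ) (hy : y ∈ ball p (ρ / 2)) :
    h / 2 ≤ tent p ρ h y := by
  have hdist : dist y p / ρ ≤ 1 / 2 := by
    rw [div_le_iff₀ hρ]; linarith [mem_ball.1 hy]
  calc h / 2 = h * (1 - 1 / 2) := by ring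
    _ ≤ tent p ρ h y :=
        mul_le_mul_of_nonneg_left ((sub_le_sub_left hdist 1).trans (le_max_right _ _)) hh

lemma lintegral_ofReal_tent_le [MeasurableSpace X] [OpensMeasurableSpace X] (μ : Measure X)
    (hh : 0 ≤ h) (hρ : 0 < ρ) :
    ∫⁻ y, ENNReal.ofReal (tent p ρ h y) ∂μ ≤ ENNReal.ofReal h * μ (ball p ρ) := by
  rw [← lintegral_indicator_const measurableSet_ball]
  refine lintegral_mono fun y => ?_
  by_cases hy : y ∈ ball p ρ
  · rw [indicator_of_mem hy]
    exact ENNReal.ofReal_le_ofReal (tent_le hh hρ.le)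
  · rw [indicator_of_notMem hy,
      Function.notMem_support.1 fun h' => hy (support_tent_subset hρ h'), ENNReal.ofReal_zero]

end Tent

lemma locallyFinite_ball_natCast_smul {E : Type*} [NormedAddCommGroup E] [NormedSpace ℝ E]
    {e : E} (he : e ≠ 0) (r : ℝ) : LocallyFinite fun i : ℕ => ball ((i : ℝ) • e) r := by
  intro x
  refine ⟨ball x 1, ball_mem_nhds x one_pos,
    (Set.finite_Iio ⌈(‖x‖ + 1 + r) / ‖e‖⌉₊).subset ?_⟩
  rintro i ⟨y, hyi, hyx⟩
  rw [mem_Iio, Nat.lt_ceil, lt_div_iff₀ (norm_pos_iff.2 he)]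
  calc (i : ℝ) * ‖e‖ = dist ((i : ℝ) • e) 0 := by
        rw [dist_zero_right, norm_smul, Real.norm_natCast]
    _ ≤ dist ((i : ℝ) • e) y + dist y x + dist x 0 := dist_triangle4 _ _ _ _
    _ < r + 1 + ‖x‖ := by
        rw [dist_comm, dist_zero_right]
        gcongr
        exacts [mem_ball.1 hyi, mem_ball.1 hyx]
    _ = ‖x‖ + 1 + r := by ring

noncomputable def spikeRadius (n i : ℕ) : ℝ := exp (-((i : ℝ) ^ 3 + 6 * i) / n)

noncomputable def spikeHeight (i : ℕ) : ℝ := exp ((i : ℝ) ^ 3 + 5 * i)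

noncomputable def spikes {E : Type*} [NormedAddCommGroup E] [NormedSpace ℝ E] (n : ℕ) (e : E)
    (y : E) : ℝ :=
  ∑ᶠ i : ℕ, tent ((i : ℝ) • e) (spikeRadius n i) (spikeHeight i) y

lemma spikeRadius_pos (n i : ℕ) : 0 < spikeRadius n i := exp_pos _

lemma spikeRadius_le_one (n i : ℕ) : spikeRadius n i ≤ 1 :=
  exp_le_one_iff.2 (div_nonpos_of_nonpos_of_nonneg (neg_nonpos.2 (by positivity)) n.cast_nonneg)

lemma spikeHeight_pos (i : ℕ) : 0 < spikeHeight i := exp_pos _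

lemma spikeHeight_mul_spikeRadius_pow {n : ℕ} (hn : n ≠ 0) (i : ℕ) :
    spikeHeight i * spikeRadius n i ^ n = exp (-i) := by
  rw [spikeHeight, spikeRadius, ← exp_nat_mul, ← exp_add]
  congr 1
  field_simp
  ring

lemma exp_le_spikeHeight_sq_mul_spikeRadius_pow {n : ℕ} (hn : 3 ≤ n) (i : ℕ) :
    exp (((n : ℝ) - 2) / n * (i : ℝ) ^ 3) ≤ spikeHeight i ^ 2 * spikeRadius n i ^ (n + 2) := by
  have hn' : (3 : ℝ) ≤ n := by exact_mod_cast hn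
  have hsplit : spikeHeight i ^ 2 * spikeRadius n i ^ (n + 2) =
      exp (((n : ℝ) - 2) / n * (i : ℝ) ^ 3 + (4 - 12 / n) * i) := by
    rw [spikeHeight, spikeRadius, ← exp_nat_mul, ← exp_nat_mul, ← exp_add]
    congr 1
    field_simp
    push_cast
    ring
  rw [hsplit, exp_le_exp, le_add_iff_nonneg_right]
  have : 12 / (n : ℝ) ≤ 4 := by rw [div_le_iff₀ (by linarith)]; linarith
  exact mul_nonneg (by linarith) i.cast_nonneg

section Spikes

variable {n : ℕ} {E : Type*} [NormedAddCommGroup E] [NormedSpace ℝ E] {e : E}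

lemma locallyFinite_support_tent_spike (he : e ≠ 0) :
    LocallyFinite fun i : ℕ =>
      Function.support (tent ((i : ℝ) • e) (spikeRadius n i) (spikeHeight i)) :=
  (locallyFinite_ball_natCast_smul he 1).subset fun i =>
    (support_tent_subset (spikeRadius_pos n i)).trans (ball_subset_ball (spikeRadius_le_one n i))

lemma continuous_spikes (he : e ≠ 0) : Continuous (spikes n e) :=
  continuous_finsum (fun _ => continuous_tent) (locallyFinite_support_tent_spike he)

lemma spikes_nonneg (y : E) : 0 ≤ spikes n e y :=
  finsum_nonneg fun i => tent_nonneg (spikeHeight_pos i).le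

lemma tent_le_spikes (he : e ≠ 0) (i : ℕ) (y : E) :
    tent ((i : ℝ) • e) (spikeRadius n i) (spikeHeight i) y ≤ spikes n e y :=
  single_le_finsum i ((locallyFinite_support_tent_spike he).point_finite y)
    fun j => tent_nonneg (spikeHeight_pos j).le

lemma ofReal_spikes (he : e ≠ 0) (y : E) :
    ENNReal.ofReal (spikes n e y) =
      ∑' i : ℕ, ENNReal.ofReal (tent ((i : ℝ) • e) (spikeRadius n i) (spikeHeight i) y) := by
  have hfin := (locallyFinite_support_tent_spike (n := n) he).point_finite y
  rw [spikes, ← tsum_eq_finsum (L := .unconditional ℕ) hfin, ENNReal.ofReal_tsum_of_nonneg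
    (fun j => tent_nonneg (spikeHeight_pos j).le) (summable_of_hasFiniteSupport hfin)]

end Spikes

noncomputable def unitBallVolume (n : ℕ) : ℝ :=
  volume.real (ball (0 : EuclideanSpace ℝ (Fin n)) 1)

noncomputable def spikeConst (n : ℕ) : ℝ :=
  (4 * π) ^ (-(n : ℝ) / 2) * exp (-1) / 2 ^ (n + 1) * unitBallVolume n

lemma unitBallVolume_pos (n : ℕ) : 0 < unitBallVolume n :=
  ENNReal.toReal_pos (measure_ball_pos volume _ one_pos).ne' measure_ball_lt_top.ne

lemma spikeConst_pos (n : ℕ) : 0 < spikeConst n := by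
  have := unitBallVolume_pos n
  unfold spikeConst
  positivity

section SpikesInEuclideanSpace

variable {n : ℕ} {e : EuclideanSpace ℝ (Fin n)}

lemma volume_ball_eq_ofReal (p : EuclideanSpace ℝ (Fin n)) {r : ℝ} (hr : 0 < r) :
    volume (ball p r) = ENNReal.ofReal (r ^ n * unitBallVolume n) := by
  rw [Measure.addHaar_ball_of_pos _ _ hr, finrank_euclideanSpace_fin, unitBallVolume,
    ENNReal.ofReal_mul (by positivity), ofReal_measureReal measure_ball_lt_top.ne]

lemma volume_real_ball_eq (p : EuclideanSpace ℝ (Fin n)) {r : ℝ} (hr : 0 < r) :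
    volume.real (ball p r) = r ^ n * unitBallVolume n := by
  rw [measureReal_def, volume_ball_eq_ofReal p hr,
    ENNReal.toReal_ofReal (by have := unitBallVolume_pos n; positivity)]

lemma integrable_spikes (hn : n ≠ 0) (he : e ≠ 0) : Integrable (spikes n e) := by
  refine ⟨(continuous_spikes he).aestronglyMeasurable,
    (hasFiniteIntegral_iff_ofReal (ae_of_all _ spikes_nonneg)).2 ?_⟩
  calc ∫⁻ y, ENNReal.ofReal (spikes n e y)
      = ∑' i : ℕ,
          ∫⁻ y, ENNReal.ofReal (tent ((i : ℝ) • e) (spikeRadius n i) (spikeHeight i) y) := by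
        simp_rw [ofReal_spikes he]
        exact lintegral_tsum fun i => continuous_tent.measurable.ennreal_ofReal.aemeasurable
    _ ≤ ∑' i : ℕ,
          ENNReal.ofReal (spikeHeight i) * volume (ball ((i : ℝ) • e) (spikeRadius n i)) :=
        ENNReal.tsum_le_tsum fun i =>
          lintegral_ofReal_tent_le _ (spikeHeight_pos i).le (spikeRadius_pos n i)
    _ = ∑' i : ℕ, ENNReal.ofReal (exp (-i) * unitBallVolume n) := by
        congr 1 with i
        rw [volume_ball_eq_ofReal _ (spikeRadius_pos n i),
          ← ENNReal.ofReal_mul (spikeHeight_pos i).le, ← mul_assoc,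
          spikeHeight_mul_spikeRadius_pow hn]
    _ = ENNReal.ofReal (∑' i : ℕ, exp (-i) * unitBallVolume n) :=
        (ENNReal.ofReal_tsum_of_nonneg (fun i => by have := unitBallVolume_pos n; positivity)
          (Real.summable_exp_neg_nat.mul_right _)).symm
    _ < ⊤ := ENNReal.ofReal_lt_top

lemma spikeConst_mul_spikeHeight_le_heatConv (hn : n ≠ 0) (he : e ≠ 0) {i : ℕ}
    {x : EuclideanSpace ℝ (Fin n)} (hx : x ∈ ball ((i : ℝ) • e) (spikeRadius n i / 2)) {t : ℝ}
    (ht₁ : spikeRadius n i ^ 2 / 4 ≤ t) (ht₂ : t ≤ spikeRadius n i ^ 2) :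
    spikeConst n * spikeHeight i ≤ heatConv (spikes n e) x t := by
  set ρ := spikeRadius n i
  have hρ : 0 < ρ := spikeRadius_pos n i
  have ht : 0 < t := (by positivity : 0 < ρ ^ 2 / 4).trans_le ht₁
  have hbound := le_heatConv_of_le_on_ball (x := x) (m := spikeHeight i / 2)
    (integrable_spikes hn he) spikes_nonneg ht
    (fun y hy => (half_le_tent (spikeHeight_pos i).le hρ hy).trans (tent_le_spikes he i y))
    (by nlinarith [mem_ball.1 hx, dist_nonneg (x := x) (y := (i : ℝ) • e)])
  rw [volume_real_ball_eq _ (half_pos hρ)] at hbound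
  have hkernel : (4 * π) ^ (-(n : ℝ) / 2) * (ρ ^ n)⁻¹ ≤ (4 * π * t) ^ (-(n : ℝ) / 2) := by
    have hsq : (ρ ^ 2) ^ (-(n : ℝ) / 2) = (ρ ^ n)⁻¹ := by
      rw [← rpow_natCast ρ 2, ← rpow_mul hρ.le, ← rpow_natCast, ← rpow_neg hρ.le]
      congr 1
      push_cast
      ring
    rw [← hsq, ← mul_rpow (by positivity) (by positivity)]
    exact rpow_le_rpow_of_nonpos (by positivity) (by gcongr)
      (by have := n.cast_nonneg (α := ℝ); linarith)
  refine le_trans ?_ hbound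
  have := unitBallVolume_pos n
  have := spikeHeight_pos i
  calc spikeConst n * spikeHeight i
      = (4 * π) ^ (-(n : ℝ) / 2) * (ρ ^ n)⁻¹ * exp (-1) * (spikeHeight i / 2) *
          ((ρ / 2) ^ n * unitBallVolume n) := by
        rw [spikeConst, div_pow]
        field_simp
        ring
    _ ≤ _ := by gcongr

end SpikesInEuclideanSpace

lemma mul_measure_le_setLIntegral_setLIntegral {α β : Type*} [MeasurableSpace α]
    [MeasurableSpace β] {μ : Measure α} {ν : Measure β} {s : Set α} {s' : Set β}
    (hs : MeasurableSet s) (hs' : MeasurableSet s') {F : α → β → ENNReal} {c : ENNReal}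
    (hF : ∀ a ∈ s, ∀ b ∈ s', c ≤ F a b) :
    c * ν s' * μ s ≤ ∫⁻ a in s, ∫⁻ b in s', F a b ∂ν ∂μ := by
  rw [← setLIntegral_const, ← setLIntegral_const]
  exact setLIntegral_mono' hs fun a ha => setLIntegral_mono' hs' fun b hb => hF a ha b hb

lemma exists_le_lintegral_sq_heatConv_spikes {n : ℕ} (hn : 3 ≤ n) {e : EuclideanSpace ℝ (Fin n)}
    (he : ‖e‖ = 1) :
    ∃ C > 0, ∀ i : ℕ, ENNReal.ofReal (C * exp (((n : ℝ) - 2) / n * (i : ℝ) ^ 3)) ≤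
      ∫⁻ t in Ioc (0 : ℝ) 1, ∫⁻ x in ball (0 : EuclideanSpace ℝ (Fin n)) ((i : ℝ) + 1),
        ENNReal.ofReal (heatConv (spikes n e) x t ^ 2) := by
  have hn0 : n ≠ 0 := by omega
  have he0 : e ≠ 0 := norm_ne_zero_iff.1 (by rw [he]; exact one_ne_zero)
  have hκ := spikeConst_pos n
  have hω := unitBallVolume_pos n
  refine ⟨spikeConst n ^ 2 * unitBallVolume n * 3 / 2 ^ (n + 2), by positivity, fun i => ?_⟩
  set ρ := spikeRadius n i
  have hρ : 0 < ρ := spikeRadius_pos n i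
  have hρ1 : ρ ≤ 1 := spikeRadius_le_one n i
  have hh := spikeHeight_pos i
  have hwindow : Ioc (ρ ^ 2 / 4) (ρ ^ 2) ⊆ Ioc 0 1 := fun t ht =>
    ⟨(by positivity : (0 : ℝ) < ρ ^ 2 / 4).trans ht.1, ht.2.trans (pow_le_one₀ hρ.le hρ1)⟩
  have hball : ball ((i : ℝ) • e) (ρ / 2) ⊆ ball 0 ((i : ℝ) + 1) := by
    refine ball_subset_ball' ?_
    rw [dist_zero_right, norm_smul, he, Real.norm_natCast]
    linarith
  calc ENNReal.ofReal (spikeConst n ^ 2 * unitBallVolume n * 3 / 2 ^ (n + 2) *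
        exp (((n : ℝ) - 2) / n * (i : ℝ) ^ 3))
      ≤ ENNReal.ofReal ((spikeConst n * spikeHeight i) ^ 2) *
          volume (ball ((i : ℝ) • e) (ρ / 2)) * volume (Ioc (ρ ^ 2 / 4) (ρ ^ 2)) := by
        rw [Real.volume_Ioc, volume_ball_eq_ofReal _ (half_pos hρ), ← ENNReal.ofReal_mul
          (by positivity), ← ENNReal.ofReal_mul (by positivity)]
        refine ENNReal.ofReal_le_ofReal ?_
        calc _ ≤ spikeConst n ^ 2 * unitBallVolume n * 3 / 2 ^ (n + 2) *
              (spikeHeight i ^ 2 * ρ ^ (n + 2)) := by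
              gcongr
              exact exp_le_spikeHeight_sq_mul_spikeRadius_pow hn i
          _ = _ := by rw [div_pow]; ring
    _ ≤ ∫⁻ t in Ioc (ρ ^ 2 / 4) (ρ ^ 2), ∫⁻ x in ball ((i : ℝ) • e) (ρ / 2),
          ENNReal.ofReal (heatConv (spikes n e) x t ^ 2) :=
        mul_measure_le_setLIntegral_setLIntegral measurableSet_Ioc measurableSet_ball
          fun t ht x hx => ENNReal.ofReal_le_ofReal (pow_le_pow_left₀ (by positivity)
            (spikeConst_mul_spikeHeight_le_heatConv hn0 he0 hx ht.1.le ht.2) 2)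
    _ ≤ _ := (lintegral_mono fun t => lintegral_mono_set hball).trans (lintegral_mono_set hwindow)

section GrowthCondition

variable {L : ℝ → ℝ}

lemma lintegral_Ioi_div_ne_top_of_cube_le (hL : ∀ r > 0, 0 < L r)
    (hLmono : ∀ r s : ℝ, 0 < r → r ≤ s → L r ≤ L s) {c : ℝ} (hc : 0 < c)
    (hcube : ∀ᶠ r in atTop, c * r ^ 3 ≤ L r) :
    ∫⁻ r in Ioi 1, ENNReal.ofReal (r / L r) ≠ ⊤ := by
  obtain ⟨R₀, hR₀⟩ := eventually_atTop.1 hcube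
  set R := max R₀ 1
  have hR1 : 1 ≤ R := le_max_right _ _
  rw [← Ioc_union_Ioi_eq_Ioi hR1, lintegral_union measurableSet_Ioi Ioc_disjoint_Ioi_same]
  refine ENNReal.add_ne_top.2
    ⟨ne_top_of_le_ne_top (b := ∫⁻ _ in Ioc 1 R, ENNReal.ofReal (R / L 1))
    ?_ (setLIntegral_mono' measurableSet_Ioc fun r hr => ENNReal.ofReal_le_ofReal ?_),
    ne_top_of_le_ne_top (b := ∫⁻ r in Ioi R, ENNReal.ofReal (c⁻¹ * r ^ (-2 : ℝ)))
    ?_ (setLIntegral_mono' measurableSet_Ioi fun r hr => ENNReal.ofReal_le_ofReal ?_)⟩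
  · rw [setLIntegral_const, Real.volume_Ioc]
    exact ENNReal.mul_ne_top ENNReal.ofReal_ne_top ENNReal.ofReal_ne_top
  · exact div_le_div₀ (by linarith) hr.2 (hL 1 one_pos) (hLmono 1 r one_pos hr.1.le)
  · exact (((integrableOn_Ioi_rpow_of_lt (by norm_num) (by linarith)).const_mul c⁻¹)
      |>.lintegral_lt_top).ne
  · have hr0 : 0 < r := by linarith [mem_Ioi.1 hr]
    calc r / L r ≤ r / (c * r ^ 3) := div_le_div_of_nonneg_left hr0.le (by positivity)
          (hR₀ r ((le_max_left _ _).trans (mem_Ioi.1 hr).le))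
      _ = c⁻¹ * r ^ (-2 : ℝ) := by
          rw [rpow_neg hr0.le, show (2 : ℝ) = (2 : ℕ) by norm_num, rpow_natCast]
          field_simp

lemma eventually_cube_le_of_le_exp {G : ℝ → ENNReal} (hG : Monotone G) {C c : ℝ} (hC : 0 < C)
    (hc : 0 < c) (hlow : ∀ i : ℕ, 1 ≤ i → ENNReal.ofReal (C * exp (c * (i : ℝ) ^ 3)) ≤ G (i + 1))
    (hup : ∀ r > 0, G r ≤ ENNReal.ofReal (exp (L r))) :
    ∀ᶠ r in atTop, c / 16 * r ^ 3 ≤ L r := by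
  have hpoly : ∀ᶠ r : ℝ in atTop, -log C ≤ c / 16 * r ^ 3 :=
    ((tendsto_pow_atTop three_ne_zero).const_mul_atTop (by positivity)).eventually_ge_atTop _
  filter_upwards [hpoly, eventually_ge_atTop 4] with r hr hr4
  set i := ⌊r - 1⌋₊
  have hi1 : 1 ≤ i := Nat.le_floor (by push_cast; linarith)
  have hir : (i : ℝ) + 1 ≤ r := by linarith [Nat.floor_le (show 0 ≤ r - 1 by linarith)]
  have hri : r / 2 ≤ i := by linarith [Nat.lt_floor_add_one (r - 1)]
  have hexp : C * exp (c * (i : ℝ) ^ 3) ≤ exp (L r) :=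
    (ENNReal.ofReal_le_ofReal_iff (exp_pos _).le).1
      ((hlow i hi1).trans ((hG hir).trans (hup r (by linarith))))
  have hlog : log C + c * (i : ℝ) ^ 3 ≤ L r := by
    rwa [← exp_le_exp, exp_add, exp_log hC]
  have hcube : c * (r / 2) ^ 3 ≤ c * (i : ℝ) ^ 3 := by gcongr
  nlinarith

end GrowthCondition

/-- **The spiked example (Section 3).** For `n ≥ 3` there is a continuous nonnegative
integrable initial datum `u₀` on `ℝⁿ` and a constant `C(n) > 0` such that the heat-kernel
convolution `u` satisfies: (i) `0 ≤ u(x,t) ≤ ‖u₀‖_{L¹} (4πt)^(-n/2)` on `ℝⁿ × (0,1]`,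
so `u` lies in the uniqueness class of Theorem 1; and (ii) for every integer `i ≥ 1`,
`∫₀¹ ∫_{B(0,i+1)} u² ≥ C(n) e^(((n-2)/n) i³)`, so `u` violates the growth condition
`∫₀¹ ∫_{B(0,r)} u² ≤ e^(L(r))` for every positive nondecreasing `L` with
`∫₁^∞ r / L(r) dr = ∞`. -/
theorem spiked_example_exists (n : ℕ) (hn : 3 ≤ n) :
    ∃ (u₀ : EuclideanSpace ℝ (Fin n) → ℝ) (Cn : ℝ),
      Continuous u₀ ∧ (∀ y, 0 ≤ u₀ y) ∧ Integrable u₀ ∧ 0 < Cn ∧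
      (∀ (x : EuclideanSpace ℝ (Fin n)), ∀ t ∈ Set.Ioc (0:ℝ) 1,
        0 ≤ heatConv u₀ x t ∧
        heatConv u₀ x t ≤ (∫ y, |u₀ y|) * (4 * π * t) ^ (-(n:ℝ) / 2)) ∧
      (∀ i : ℕ, 1 ≤ i →
        ENNReal.ofReal (Cn * Real.exp (((n:ℝ) - 2) / n * (i:ℝ) ^ 3)) ≤
          ∫⁻ t in Set.Ioc (0:ℝ) 1,
            ∫⁻ x in ball (0 : EuclideanSpace ℝ (Fin n)) ((i:ℝ) + 1),
              ENNReal.ofReal ((heatConv u₀ x t) ^ 2)) ∧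
      (∀ L : ℝ → ℝ, (∀ r > (0:ℝ), 0 < L r) → (∀ r s : ℝ, 0 < r → r ≤ s → L r ≤ L s) →
        (∫⁻ r in Set.Ioi (1:ℝ), ENNReal.ofReal (r / L r) = ⊤) →
        ¬ (∀ r > (0:ℝ),
          ∫⁻ t in Set.Ioc (0:ℝ) 1, ∫⁻ x in ball (0 : EuclideanSpace ℝ (Fin n)) r,
            ENNReal.ofReal ((heatConv u₀ x t) ^ 2) ≤ ENNReal.ofReal (Real.exp (L r)))) := by
  set e : EuclideanSpace ℝ (Fin n) := EuclideanSpace.single ⟨0, by omega⟩ 1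
  have he : ‖e‖ = 1 := by simp [e]
  have he0 : e ≠ 0 := norm_ne_zero_iff.1 (by rw [he]; exact one_ne_zero)
  have hint := integrable_spikes (by omega) he0
  obtain ⟨C, hC, hlow⟩ := exists_le_lintegral_sq_heatConv_spikes hn he
  have hc : 0 < ((n : ℝ) - 2) / n := by
    have : (3 : ℝ) ≤ n := by exact_mod_cast hn
    exact div_pos (by linarith) (by linarith)
  have hG : Monotone fun r => ∫⁻ t in Ioc (0 : ℝ) 1,
      ∫⁻ x in ball (0 : EuclideanSpace ℝ (Fin n)) r,
        ENNReal.ofReal (heatConv (spikes n e) x t ^ 2) :=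
    fun a b hab => lintegral_mono fun t => lintegral_mono_set (ball_subset_ball hab)
  exact ⟨spikes n e, C, continuous_spikes he0, spikes_nonneg, hint, hC,
    fun x t ht => ⟨heatConv_nonneg spikes_nonneg x ht.1.le, heatConv_le hint x ht.1.le⟩,
    fun i _ => hlow i, fun L hL hLmono hLint hup =>
      lintegral_Ioi_div_ne_top_of_cube_le hL hLmono (by positivity)
        (eventually_cube_le_of_le_exp hG hC hc (fun i _ => hlow i) hup) hLint⟩
end
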